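/- The complete bipartite-like union construction: the edge set of K_{4,4,4} can be partitioned into 3 subgraphs, each planar and triangle-free (girth at least 4). -/

import Mathlib

/-!
Label the vertices of `K_{4,4,4}` as `(i, x)` with `i ∈ ℤ/3` the part and `x ∈ ℤ/4`. For each
pair of consecutive parts `i, i + 1`, the edges `(i, x) — (i + 1, y)` split into four perfect
matchings according to the difference `y - x`. The twelve matchings are shared out among three
colours, four each, so that no colour receives one difference from each pair with sum `0` in
`ℤ/4`; since the differences along a triangle `(0, x), (1, y), (2, z)` add up to `0`, every colour
class is triangle-free. Each colour class is then drawn with straight edges on explicit integer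
points, and planarity of the drawing reduces to finitely many sign tests of cross products.
-/

open SimpleGraph Set

/-- A simple graph is planar if it admits a drawing in the plane: an injective placement of
vertices together with, for each edge, a simple (injective continuous) arc joining its endpoints,
such that arcs pass through no other vertices and two distinct arcs meet only in common
endpoints. -/
def IsPlanar {V : Type*} (G : SimpleGraph V) : Prop :=
  ∃ (pos : V → ℝ × ℝ) (arc : V → V → Set (ℝ × ℝ)),
    Function.Injective pos ∧
    (∀ u v, G.Adj u v →
      ∃ f : ℝ → ℝ × ℝ, ContinuousOn f (Set.Icc 0 1) ∧ Set.InjOn f (Set.Icc 0 1) ∧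
        f 0 = pos u ∧ f 1 = pos v ∧ arc u v = f '' Set.Icc 0 1) ∧
    (∀ u v, arc u v = arc v u) ∧
    (∀ u v, G.Adj u v → ∀ w, pos w ∈ arc u v → w = u ∨ w = v) ∧
    (∀ u v u' v', G.Adj u v → G.Adj u' v' → s(u, v) ≠ s(u', v') →
      arc u v ∩ arc u' v' ⊆ ({pos u, pos v} : Set (ℝ × ℝ)) ∩ {pos u', pos v'})

/-- `cross (B - A) (P - A)` is twice the signed area of the triangle `A B P`: its sign tells on
which side of the line `A B` the point `P` lies. -/
def cross {R : Type*} [CommRing R] (a b : R × R) : R := a.1 * b.2 - a.2 * b.1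

lemma map_cross {R S : Type*} [CommRing R] [CommRing S] (f : R →+* S) (a b : R × R) :
    cross (f.prodMap f a) (f.prodMap f b) = f (cross a b) := by
  simp [cross]

section Segment

variable {𝕜 : Type*} [Field 𝕜] [LinearOrder 𝕜] [IsStrictOrderedRing 𝕜]

lemma cross_sub_eq_zero_of_mem_segment {A B P : 𝕜 × 𝕜} (h : P ∈ segment 𝕜 A B) :
    cross (B - A) (P - A) = 0 := by
  rw [segment_eq_image'] at h
  obtain ⟨t, -, rfl⟩ := h
  simp only [cross, add_sub_cancel_left, Prod.smul_fst, Prod.smul_snd, smul_eq_mul]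
  ring

lemma segment_inter_segment_subset_of_cross_ne_zero {A B C : 𝕜 × 𝕜}
    (h : cross (B - A) (C - A) ≠ 0) : segment 𝕜 A B ∩ segment 𝕜 A C ⊆ {A} := by
  rintro P ⟨hB, hC⟩
  rw [segment_eq_image'] at hB hC
  obtain ⟨s, -, rfl⟩ := hB
  obtain ⟨t, -, hst⟩ := hC
  have hst : t • (C - A) = s • (B - A) := add_left_cancel hst
  have hs : s * cross (B - A) (C - A) = 0 := by
    have h1 := congrArg Prod.fst hst
    have h2 := congrArg Prod.snd hst
    simp only [Prod.smul_fst, Prod.smul_snd, smul_eq_mul] at h1 h2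
    simp only [cross]
    linear_combination (C - A).1 * h2 - (C - A).2 * h1
  simp [(mul_eq_zero.mp hs).resolve_right h]

lemma disjoint_segment_of_cross_mul_pos {A B C D : 𝕜 × 𝕜}
    (h : 0 < cross (B - A) (C - A) * cross (B - A) (D - A)) :
    Disjoint (segment 𝕜 A B) (segment 𝕜 C D) := by
  refine Set.disjoint_left.mpr fun P hAB hCD => ?_
  rw [segment_eq_image] at hCD
  obtain ⟨t, ⟨ht0, ht1⟩, rfl⟩ := hCD
  set c := cross (B - A) (C - A)
  set d := cross (B - A) (D - A)
  have hzero : (1 - t) * c + t * d = 0 := by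
    rw [← cross_sub_eq_zero_of_mem_segment hAB]
    simp only [c, d, cross, Prod.fst_sub, Prod.snd_sub, Prod.fst_add, Prod.snd_add,
      Prod.smul_fst, Prod.smul_snd, smul_eq_mul]
    ring
  have hsum : (1 - t) * c ^ 2 + c * d + t * d ^ 2 = 0 := by
    linear_combination (c + d) * hzero
  linarith [mul_nonneg (sub_nonneg.2 ht1) (sq_nonneg c), mul_nonneg ht0 (sq_nonneg d)]

end Segment

section StraightLine

variable {V : Type*} {G : SimpleGraph V}

theorem isPlanar_of_straightLine (pos : V → ℝ × ℝ) (hpos : Function.Injective pos)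
    (hoff : ∀ u v w, G.Adj u v → w ≠ u → w ≠ v → cross (pos v - pos u) (pos w - pos u) ≠ 0)
    (hsep : ∀ u v a b, G.Adj u v → G.Adj a b → u ≠ a → u ≠ b → v ≠ a → v ≠ b →
      0 < cross (pos v - pos u) (pos a - pos u) * cross (pos v - pos u) (pos b - pos u) ∨
      0 < cross (pos b - pos a) (pos u - pos a) * cross (pos b - pos a) (pos v - pos a)) :
    IsPlanar G := by
  have common : ∀ x y z, G.Adj x y → G.Adj x z → y ≠ z →
      segment ℝ (pos x) (pos y) ∩ segment ℝ (pos x) (pos z) ⊆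
        ({pos x, pos y} : Set (ℝ × ℝ)) ∩ {pos x, pos z} := fun x y z hy hz hyz =>
    (segment_inter_segment_subset_of_cross_ne_zero (hoff x y z hy hz.ne' hyz.symm)).trans
      (by simp)
  refine ⟨pos, fun u v => segment ℝ (pos u) (pos v), hpos, fun u v huv => ?_,
    fun u v => segment_symm ℝ _ _, fun u v huv w hw => ?_, fun u v u' v' huv hu'v' hne => ?_⟩
  · refine ⟨AffineMap.lineMap (pos u) (pos v), AffineMap.lineMap_continuous.continuousOn,
      (AffineMap.lineMap_injective ℝ (hpos.ne huv.ne)).injOn, AffineMap.lineMap_apply_zero _ _,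
      AffineMap.lineMap_apply_one _ _, segment_eq_image_lineMap ℝ _ _⟩
  · by_contra! hw'
    exact hoff u v w huv hw'.1 hw'.2 (cross_sub_eq_zero_of_mem_segment hw)
  · dsimp only
    obtain rfl | huu' := eq_or_ne u u'
    · exact common u v v' huv hu'v' fun h => hne (h ▸ rfl)
    obtain rfl | huv' := eq_or_ne u v'
    · rw [segment_symm ℝ (pos u'), Set.pair_comm (pos u')]
      exact common u v u' huv hu'v'.symm fun h => hne (h ▸ Sym2.eq_swap)
    obtain rfl | hvu' := eq_or_ne v u'
    · rw [segment_symm ℝ (pos u), Set.pair_comm (pos u)]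
      exact common v u v' huv.symm hu'v' fun h => hne (h ▸ Sym2.eq_swap)
    obtain rfl | hvv' := eq_or_ne v v'
    · rw [segment_symm ℝ (pos u), Set.pair_comm (pos u), segment_symm ℝ (pos u'),
        Set.pair_comm (pos u')]
      exact common v u u' huv.symm hu'v'.symm fun h => hne (h ▸ rfl)
    rcases hsep u v u' v' huv hu'v' huu' huv' hvu' hvv' with h | h
    · simp [(disjoint_segment_of_cross_mul_pos h).inter_eq]
    · simp [(disjoint_segment_of_cross_mul_pos h).symm.inter_eq]

theorem isPlanar_of_intPoints (q : V → ℤ × ℤ) (hq : Function.Injective q)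
    (hoff : ∀ u v w, G.Adj u v → w ≠ u → w ≠ v → cross (q v - q u) (q w - q u) ≠ 0)
    (hsep : ∀ u v a b, G.Adj u v → G.Adj a b → u ≠ a → u ≠ b → v ≠ a → v ≠ b →
      0 < cross (q v - q u) (q a - q u) * cross (q v - q u) (q b - q u) ∨
      0 < cross (q b - q a) (q u - q a) * cross (q b - q a) (q v - q a)) :
    IsPlanar G := by
  set φ := (Int.castRingHom ℝ).prodMap (Int.castRingHom ℝ)
  have hcross : ∀ a b c : V, cross (φ (q b) - φ (q a)) (φ (q c) - φ (q a)) =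
      ((cross (q b - q a) (q c - q a) : ℤ) : ℝ) := fun a b c => by
    rw [← map_sub, ← map_sub, map_cross]; rfl
  refine isPlanar_of_straightLine (φ ∘ q) ((Prod.map_injective.2 ⟨Int.cast_injective,
    Int.cast_injective⟩).comp hq) ?_ ?_
  · intro u v w huv hu hv
    simpa [hcross] using hoff u v w huv hu hv
  · intro u v a b huv hab h1 h2 h3 h4
    simpa [hcross, ← Int.cast_mul] using hsep u v a b huv hab h1 h2 h3 h4

end StraightLine

lemma four_le_egirth_of_cliqueFree_three {α : Type*} {G : SimpleGraph α} (h : G.CliqueFree 3) :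
    4 ≤ G.egirth := by
  refine le_egirth.2 fun a w hw => ?_
  have h3 := hw.three_le_length
  have hne : w.length ≠ 3 := fun hw3 =>
    (is3Clique_iff_exists_cycle_length_three.2 ⟨a, w, hw, hw3⟩).elim h
  exact_mod_cast (by omega : 4 ≤ w.length)

namespace K444

abbrev Vertex := Σ _ : Fin 3, Fin 4

/-- `differenceColor i d` is the colour of the edges `(i, x) — (i + 1, y)` with `y - x = d`. -/
def differenceColor : Fin 3 → Fin 4 → Fin 3 :=
  ![![0, 0, 1, 2], ![0, 1, 1, 2], ![2, 0, 1, 2]]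

def edgeColor (a b : Vertex) : Fin 3 :=
  if b.1 = a.1 + 1 then differenceColor a.1 (b.2 - a.2) else differenceColor b.1 (a.2 - b.2)

lemma edgeColor_comm : ∀ a b : Vertex, a.1 ≠ b.1 → edgeColor b a = edgeColor a b := by
  decide +kernel

lemma edgeColor_ne_of_triangle : ∀ a b c : Vertex, a.1 ≠ b.1 → a.1 ≠ c.1 → b.1 ≠ c.1 →
    edgeColor a b = edgeColor a c → edgeColor a b ≠ edgeColor b c := by
  decide +kernel

def edgeLabeling : EdgeLabeling (completeMultipartiteGraph fun _ : Fin 3 => Fin 4) (Fin 3) :=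
  .mk (fun a b _ => edgeColor a b) fun a b h => edgeColor_comm a b h

lemma edgeLabeling_labelGraph_adj {k : Fin 3} {a b : Vertex} :
    (edgeLabeling.labelGraph k).Adj a b ↔ a.1 ≠ b.1 ∧ edgeColor a b = k := by
  rw [EdgeLabeling.labelGraph_adj]
  exact ⟨fun ⟨h, hk⟩ => ⟨h, hk⟩, fun ⟨h, hk⟩ => ⟨h, hk⟩⟩

lemma cliqueFree_three_labelGraph (k : Fin 3) : (edgeLabeling.labelGraph k).CliqueFree 3 := by
  intro s hs
  obtain ⟨a, b, c, hab, hac, hbc, -⟩ := is3Clique_iff.1 hs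
  rw [edgeLabeling_labelGraph_adj] at hab hac hbc
  exact edgeColor_ne_of_triangle a b c hab.1 hac.1 hbc.1 (hab.2.trans hac.2.symm)
    (hab.2.trans hbc.2.symm)

/-- Straight-line drawings of the three colour classes, found by computer search. -/
def drawing (k : Fin 3) (v : Vertex) : ℤ × ℤ :=
  (![![![(956, 275), (260, -984), (-921, -329), (-327, 983)],
        ![(477, 850), (899, -454), (-443, -897), (-912, 473)],
        ![(349, -45), (-177, -1563), (-367, 2), (180, 1568)]],
      ![![(-6, -406), (-1560, 147), (66, 364), (1566, -114)],
        ![(943, 336), (273, -958), (-989, -308), (-329, 988)],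
        ![(-850, 477), (507, 918), (897, -489), (-502, -853)]],
      ![![(988, 280), (310, -955), (-916, -310), (-266, 923)],
        ![(-276, -238), (-1024, 1222), (277, 235), (992, -1198)],
        ![(474, 856), (903, -433), (-444, -856), (-852, 434)]]] :
    Fin 3 → Fin 3 → Fin 4 → ℤ × ℤ) k v.1 v.2

lemma drawing_injective : ∀ k, Function.Injective (drawing k) := by
  decide +kernel

lemma cross_drawing_ne_zero : ∀ k (u v w : Vertex), u.1 ≠ v.1 ∧ edgeColor u v = k →
    w ≠ u → w ≠ v → cross (drawing k v - drawing k u) (drawing k w - drawing k u) ≠ 0 := by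
  decide +kernel

lemma drawing_separates_disjoint_edges : ∀ k (u v a b : Vertex),
    u.1 ≠ v.1 ∧ edgeColor u v = k → a.1 ≠ b.1 ∧ edgeColor a b = k →
    u ≠ a → u ≠ b → v ≠ a → v ≠ b →
    0 < cross (drawing k v - drawing k u) (drawing k a - drawing k u) *
      cross (drawing k v - drawing k u) (drawing k b - drawing k u) ∨
    0 < cross (drawing k b - drawing k a) (drawing k u - drawing k a) *
      cross (drawing k b - drawing k a) (drawing k v - drawing k a) := by
  decide +kernel

lemma isPlanar_labelGraph (k : Fin 3) : IsPlanar (edgeLabeling.labelGraph k) := by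
  refine isPlanar_of_intPoints (drawing k) (drawing_injective k) ?_ ?_ <;>
    simp only [edgeLabeling_labelGraph_adj]
  exacts [cross_drawing_ne_zero k, drawing_separates_disjoint_edges k]

end K444

/-- The edge set of `K_{4,4,4}` can be partitioned into 3 subgraphs, each planar with girth at
least four. -/
theorem decomposition_K444 :
    ∃ f : Fin 3 → SimpleGraph (Σ _ : Fin 3, Fin 4),
      (∀ i, IsPlanar (f i) ∧ 4 ≤ (f i).egirth) ∧
      (∀ i j, i ≠ j → Disjoint (f i).edgeSet (f j).edgeSet) ∧
      (⨆ i, f i) = completeMultipartiteGraph (fun _ : Fin 3 => Fin 4) :=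
  ⟨K444.edgeLabeling.labelGraph,
    fun k => ⟨K444.isPlanar_labelGraph k,
      four_le_egirth_of_cliqueFree_three (K444.cliqueFree_three_labelGraph k)⟩,
    fun _ _ hij => disjoint_edgeSet.2 (EdgeLabeling.pairwise_disjoint_labelGraph hij),
    EdgeLabeling.iSup_labelGraph _⟩
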